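/- arXiv:1609.01074 — 4 statements merged into one kernel-verified Lean document; each statement's English description precedes it below -/
import Mathlib

section
/- Let Ω = (a,b), let u, v ∈ BV(Ω), and let A = {x ∈ Ω : u and v are both continuous at x (in the sense that x is not a jump point of either) and their common continuous values agree, i.e. the left and right limits of the good representatives of u and v at x all coincide}. Then Du(A) = Dv(A), and moreover |Du|(A) = |Dv|(A). -/
/-!
Let `ν = Du - Dv`. On `A` it has no atoms and `ν((x, y]) = 0`, so `ν` vanishes on every closed
interval with endpoints in `A`. If `S ⊆ A` lies in an interval `I`, the intervals `[lₙ, uₙ]` with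
endpoints in `S` tending to `inf S` and `sup S` increase to a `ν`-null set `J ⊆ I` containing
`S` up to two points, so `|ν(S)| = |ν(J \ S)| ≤ |ν|(I \ A)`. Summing over the countably many
components `I` of an open `U ⊇ A` gives `|ν(A)| ≤ |ν|(U \ A)`, which outer regularity makes
arbitrarily small. The same holds for every measurable subset of `A`, so `Du` and `Dv` have the
same restriction to `A`, and hence the same mass and total variation there.
-/

open MeasureTheory Set

/-- A one-dimensional BV function on `(a,b)` represented by a constant `c` together with its
derivative, a finite signed Radon measure `μ`. -/
structure BVRep where
  c : ℝ
  μ : MeasureTheory.SignedMeasure ℝ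

/-- The left limit `u^l(x) = c + Du((a,x))` of the good representatives. -/
noncomputable def BVRep.leftLim (a : ℝ) (p : BVRep) (x : ℝ) : ℝ :=
  p.c + p.μ (Set.Ioo a x)

/-- The right limit `u^r(x) = c + Du((a,x])` of the good representatives. -/
noncomputable def BVRep.rightLim (a : ℝ) (p : BVRep) (x : ℝ) : ℝ :=
  p.c + p.μ (Set.Ioc a x)

theorem MeasureTheory.VectorMeasure.apply_eq_zero_of_countable {α M : Type*} [MeasurableSpace α]
    [MeasurableSingletonClass α] [AddCommMonoid M] [TopologicalSpace M] [T2Space M]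
    (v : VectorMeasure α M) {T : Set α} (hT : T.Countable) (h : ∀ x ∈ T, v {x} = 0) :
    v T = 0 := by
  rw [← biUnion_of_singleton T, v.of_biUnion hT (pairwiseDisjoint_singleton' T)
    fun _ _ ↦ measurableSet_singleton _]
  simp [h]

theorem Set.exists_monotone_Icc_seq_sdiff_subset {α : Type*} [ConditionallyCompleteLinearOrder α]
    [TopologicalSpace α] [OrderTopology α] [FirstCountableTopology α] {S : Set α}
    (hne : S.Nonempty) (hbddBelow : BddBelow S) (hbddAbove : BddAbove S) :
    ∃ l u : ℕ → α, (∀ n, l n ∈ S) ∧ (∀ n, u n ∈ S) ∧ Monotone (fun n ↦ Icc (l n) (u n)) ∧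
      S \ ⋃ n, Icc (l n) (u n) ⊆ {sInf S, sSup S} := by
  obtain ⟨l, hl_anti, hl_lim, hlS⟩ := exists_seq_tendsto_sInf hne hbddBelow
  obtain ⟨u, hu_mono, hu_lim, huS⟩ := exists_seq_tendsto_sSup hne hbddAbove
  refine ⟨l, u, hlS, huS, fun m n hmn ↦ Icc_subset_Icc (hl_anti hmn) (hu_mono hmn), ?_⟩
  rintro z ⟨hzS, hzJ⟩
  by_contra hz
  simp only [mem_insert_iff, mem_singleton_iff, not_or] at hz
  have hlt_z : sInf S < z := (csInf_le hbddBelow hzS).lt_of_ne' hz.1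
  have hz_lt : z < sSup S := (le_csSup hbddAbove hzS).lt_of_ne hz.2
  obtain ⟨n, hln, hun⟩ :=
    ((hl_lim.eventually (gt_mem_nhds hlt_z)).and (hu_lim.eventually (lt_mem_nhds hz_lt))).exists
  exact hzJ (mem_iUnion.2 ⟨n, hln.le, hun.le⟩)

theorem pairwiseDisjoint_image_connectedComponentIn {α : Type*} [TopologicalSpace α] (F : Set α) :
    (connectedComponentIn F '' F).PairwiseDisjoint id := by
  rintro _ ⟨x, -, rfl⟩ _ ⟨y, -, rfl⟩ hne
  refine disjoint_left.2 fun z hzx hzy ↦ hne ?_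
  rw [connectedComponentIn_eq hzx, connectedComponentIn_eq hzy]

theorem sUnion_image_connectedComponentIn {α : Type*} [TopologicalSpace α] (F : Set α) :
    ⋃₀ (connectedComponentIn F '' F) = F := by
  rw [sUnion_image]
  exact (iUnion₂_subset fun x _ ↦ connectedComponentIn_subset F x).antisymm
    fun x hx ↦ mem_biUnion hx (mem_connectedComponentIn hx)

theorem IsOpen.countable_image_connectedComponentIn {α : Type*} [TopologicalSpace α]
    [LocallyConnectedSpace α] [TopologicalSpace.SeparableSpace α] {U : Set α} (hU : IsOpen U) :
    (connectedComponentIn U '' U).Countable :=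
  (pairwiseDisjoint_image_connectedComponentIn U).countable_of_isOpen
    (by rintro _ ⟨x, -, rfl⟩; exact hU.connectedComponentIn)
    (by rintro _ ⟨x, hx, rfl⟩; exact ⟨x, mem_connectedComponentIn hx⟩)

namespace MeasureTheory.SignedMeasure

variable (ν : SignedMeasure ℝ)

theorem enorm_apply_le_totalVariation_sdiff_of_ordConnected {S I : Set ℝ} (hS : MeasurableSet S)
    (hbdd : Bornology.IsBounded S) (hSI : S ⊆ I) (hI : I.OrdConnected)
    (h : ∀ x ∈ S, ∀ y ∈ S, ν (Icc x y) = 0) :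
    ‖ν S‖ₑ ≤ ν.totalVariation (I \ S) := by
  rcases S.eq_empty_or_nonempty with rfl | hne
  · simp
  obtain ⟨l, u, hlS, huS, hmono, hSJ⟩ :=
    exists_monotone_Icc_seq_sdiff_subset hne hbdd.bddBelow hbdd.bddAbove
  set J := ⋃ n, Icc (l n) (u n)
  have hJ : MeasurableSet J := .iUnion fun _ ↦ measurableSet_Icc
  have hνJ : ν J = 0 := tendsto_nhds_unique
    (VectorMeasure.tendsto_vectorMeasure_iUnion_atTop_nat hmono fun _ ↦ measurableSet_Icc)
    (by simp only [h _ (hlS _) _ (huS _), tendsto_const_nhds])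
  have hJI : J ⊆ I := iUnion_subset fun n ↦ hI.out (hSI (hlS n)) (hSI (huS n))
  have hνSJ : ν (S \ J) = 0 :=
    ν.apply_eq_zero_of_countable ((toFinite _).subset hSJ).countable
      fun x hx ↦ by simpa using h x hx.1 x hx.1
  have hsplit : ν (J \ S) + ν S = ν J := ν.of_sdiff_of_sdiff_eq_zero hJ hS hνSJ
  calc ‖ν S‖ₑ = ‖ν (J \ S)‖ₑ := by
        rw [eq_neg_of_add_eq_zero_right (hsplit.trans hνJ), enorm_neg]
    _ ≤ ν.totalVariation (J \ S) := ν.enorm_le_totalVariation _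
    _ ≤ ν.totalVariation (I \ S) := measure_mono (sdiff_subset_sdiff_left hJI)

theorem enorm_apply_le_totalVariation_sdiff_of_isOpen {A U : Set ℝ} (hA : MeasurableSet A)
    (hbdd : Bornology.IsBounded A) (h : ∀ x ∈ A, ∀ y ∈ A, ν (Icc x y) = 0) (hU : IsOpen U)
    (hAU : A ⊆ U) :
    ‖ν A‖ₑ ≤ ν.totalVariation (U \ A) := by
  set 𝒞 := connectedComponentIn U '' U
  have h𝒞 : 𝒞.Countable := hU.countable_image_connectedComponentIn
  have hdisj : 𝒞.PairwiseDisjoint id := pairwiseDisjoint_image_connectedComponentIn U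
  have hmeas : ∀ C ∈ 𝒞, MeasurableSet C := by
    rintro _ ⟨x, -, rfl⟩
    exact hU.connectedComponentIn.measurableSet
  have hcover : ⋃ C ∈ 𝒞, C = U := by rw [← sUnion_eq_biUnion, sUnion_image_connectedComponentIn]
  have hA_eq : ⋃ C ∈ 𝒞, A ∩ C = A := by rw [← inter_iUnion₂, hcover, inter_eq_left.2 hAU]
  have hUA_eq : ⋃ C ∈ 𝒞, C \ A = U \ A := by simp only [← hcover, iUnion_sdiff]
  have hpiece : ∀ C ∈ 𝒞, ‖ν (A ∩ C)‖ₑ ≤ ν.totalVariation (C \ A) := by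
    rintro _ ⟨x, -, rfl⟩
    simpa only [sdiff_inter_self_eq_sdiff] using
      ν.enorm_apply_le_totalVariation_sdiff_of_ordConnected
        (hA.inter hU.connectedComponentIn.measurableSet) (hbdd.subset inter_subset_left)
        inter_subset_right isPreconnected_connectedComponentIn.ordConnected
        fun x hx y hy ↦ h x hx.1 y hy.1
  calc ‖ν A‖ₑ = ‖∑' C : 𝒞, ν (A ∩ C)‖ₑ := by
        rw [← ν.of_biUnion h𝒞 (hdisj.mono_on (g := (A ∩ ·)) fun _ _ ↦ inter_subset_right)
          fun C hC ↦ hA.inter (hmeas C hC), hA_eq]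
    _ ≤ ∑' C : 𝒞, ‖ν (A ∩ C)‖ₑ := enorm_tsum_le_tsum_enorm
    _ ≤ ∑' C : 𝒞, ν.totalVariation (C \ A) := ENNReal.tsum_le_tsum fun C ↦ hpiece C C.2
    _ = ν.totalVariation (U \ A) := by
        rw [← measure_biUnion h𝒞 (hdisj.mono_on (g := (· \ A)) fun _ _ ↦ sdiff_subset)
          fun C hC ↦ (hmeas C hC).diff hA, hUA_eq]

theorem restrict_eq_zero_of_forall_Icc {A : Set ℝ} (hA : MeasurableSet A)
    (hbdd : Bornology.IsBounded A) (h : ∀ x ∈ A, ∀ y ∈ A, ν (Icc x y) = 0) :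
    ν.restrict A = 0 := by
  ext E hE
  rw [VectorMeasure.restrict_apply _ hA hE, zero_apply, ← enorm_eq_zero]
  refine nonpos_iff_eq_zero.1 (le_of_forall_gt_imp_ge_of_dense fun ε hε ↦ ?_)
  have hEA : MeasurableSet (E ∩ A) := hE.inter hA
  obtain ⟨U, hEAU, hU, -, hUε⟩ :=
    hEA.exists_isOpen_sdiff_lt (measure_ne_top ν.totalVariation _) hε.ne'
  exact (ν.enorm_apply_le_totalVariation_sdiff_of_isOpen hEA (hbdd.subset inter_subset_right)
    (fun x hx y hy ↦ h x hx.2 y hy.2) hU hEAU).trans hUε.le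

theorem apply_eq_of_restrict_eq {α : Type*} [MeasurableSpace α] {s t : SignedMeasure α}
    {A : Set α} (hA : MeasurableSet A) (h : s.restrict A = t.restrict A) : s A = t A := by
  simpa only [VectorMeasure.restrict_apply _ hA hA, inter_self] using congr($h A)

theorem totalVariation_apply_eq_of_restrict_eq {α : Type*} [MeasurableSpace α]
    {s t : SignedMeasure α} {A : Set α} (hA : MeasurableSet A) (h : s.restrict A = t.restrict A) :
    s.totalVariation A = t.totalVariation A := by
  rw [totalVariation_eq_variation, totalVariation_eq_variation, ← Measure.restrict_apply_self,
    ← VectorMeasure.variation_restrict hA, h, VectorMeasure.variation_restrict hA,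
    Measure.restrict_apply_self]

theorem measurable_apply_of_monotone {α : Type*} [MeasurableSpace α] (s : SignedMeasure α)
    {f : ℝ → Set α} (hf : Monotone f) (hm : ∀ x, MeasurableSet (f x)) :
    Measurable fun x ↦ s (f x) := by
  simp_rw [s.apply_eq_posPart_real_sub_negPart_real (hm _)]
  have hmono (μ : Measure α) [IsFiniteMeasure μ] : Monotone fun x ↦ μ.real (f x) :=
    fun _ _ hxy ↦ measureReal_mono (hf hxy)
  exact (hmono _).measurable.sub (hmono _).measurable

end MeasureTheory.SignedMeasure

namespace BVRep

variable (a b : ℝ) (p q : BVRep)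

def coincidenceSet : Set ℝ :=
  {x ∈ Ioo a b | leftLim a p x = rightLim a p x ∧ leftLim a q x = rightLim a q x ∧
    leftLim a p x = leftLim a q x}

theorem measurable_leftLim : Measurable (leftLim a p) :=
  measurable_const.add <| p.μ.measurable_apply_of_monotone
    (fun _ _ h ↦ Ioo_subset_Ioo_right h) fun _ ↦ measurableSet_Ioo

theorem measurable_rightLim : Measurable (rightLim a p) :=
  measurable_const.add <| p.μ.measurable_apply_of_monotone
    (fun _ _ h ↦ Ioc_subset_Ioc_right h) fun _ ↦ measurableSet_Ioc

theorem measurableSet_coincidenceSet : MeasurableSet (coincidenceSet a b p q) :=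
  measurableSet_Ioo.inter <|
    (measurableSet_eq_fun (p.measurable_leftLim a) (p.measurable_rightLim a)).inter <|
    (measurableSet_eq_fun (q.measurable_leftLim a) (q.measurable_rightLim a)).inter
    (measurableSet_eq_fun (p.measurable_leftLim a) (q.measurable_leftLim a))

theorem sub_apply_Icc {x y : ℝ} (hax : a < x) (hxy : x ≤ y) :
    (p.μ - q.μ) (Icc x y) =
      (rightLim a p y - rightLim a q y) - (leftLim a p x - leftLim a q x) := by
  have hIcc : Ioc a y \ Ioo a x = Icc x y := by
    ext z
    simp only [Set.mem_sdiff, mem_Ioc, mem_Ioo, mem_Icc]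
    grind
  rw [← hIcc, VectorMeasure.of_sdiff measurableSet_Ioo measurableSet_Ioc
    (Ioo_subset_Ioc_self.trans (Ioc_subset_Ioc_right hxy))]
  simp only [sub_apply, leftLim, rightLim]
  ring

theorem sub_apply_Icc_eq_zero {x y : ℝ} (hx : x ∈ coincidenceSet a b p q)
    (hy : y ∈ coincidenceSet a b p q) : (p.μ - q.μ) (Icc x y) = 0 := by
  obtain ⟨hxab, hpx, hqx, hpqx⟩ := hx
  obtain ⟨-, hpy, hqy, hpqy⟩ := hy
  rcases le_or_gt x y with hxy | hyx
  · rw [sub_apply_Icc a p q hxab.1 hxy]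
    linarith
  · rw [Icc_eq_empty hyx.not_ge, VectorMeasure.empty]

theorem restrict_coincidenceSet :
    p.μ.restrict (coincidenceSet a b p q) = q.μ.restrict (coincidenceSet a b p q) := by
  rw [← sub_eq_zero, ← VectorMeasure.restrict_sub]
  exact (p.μ - q.μ).restrict_eq_zero_of_forall_Icc (measurableSet_coincidenceSet a b p q)
    ((Metric.isBounded_Ioo a b).subset (sep_subset _ _))
    fun x hx y hy ↦ sub_apply_Icc_eq_zero a b p q hx hy

end BVRep

theorem derivative_measures_agree_on_common_continuity_points_general
    (a b : ℝ) (p q : BVRep) :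
    p.μ {x ∈ Set.Ioo a b |
        BVRep.leftLim a p x = BVRep.rightLim a p x ∧
        BVRep.leftLim a q x = BVRep.rightLim a q x ∧
        BVRep.leftLim a p x = BVRep.leftLim a q x} =
      q.μ {x ∈ Set.Ioo a b |
        BVRep.leftLim a p x = BVRep.rightLim a p x ∧
        BVRep.leftLim a q x = BVRep.rightLim a q x ∧
        BVRep.leftLim a p x = BVRep.leftLim a q x} ∧
    p.μ.totalVariation {x ∈ Set.Ioo a b |
        BVRep.leftLim a p x = BVRep.rightLim a p x ∧
        BVRep.leftLim a q x = BVRep.rightLim a q x ∧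
        BVRep.leftLim a p x = BVRep.leftLim a q x} =
      q.μ.totalVariation {x ∈ Set.Ioo a b |
        BVRep.leftLim a p x = BVRep.rightLim a p x ∧
        BVRep.leftLim a q x = BVRep.rightLim a q x ∧
        BVRep.leftLim a p x = BVRep.leftLim a q x} := by
  have hA := BVRep.measurableSet_coincidenceSet a b p q
  have h := BVRep.restrict_coincidenceSet a b p q
  exact ⟨SignedMeasure.apply_eq_of_restrict_eq hA h,
    SignedMeasure.totalVariation_apply_eq_of_restrict_eq hA h⟩

/-- for `u, v ∈ BV((a,b))` and
`A = {x ∈ (a,b) : u^l(x) = u^r(x) = v^l(x) = v^r(x)}` (the set of common continuity points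
where the values agree), one has `Du(A) = Dv(A)` and `|Du|(A) = |Dv|(A)`. -/
theorem derivative_measures_agree_on_common_continuity_points
    (a b : ℝ) (hab : a < b) (p q : BVRep) :
    p.μ {x ∈ Set.Ioo a b |
        BVRep.leftLim a p x = BVRep.rightLim a p x ∧
        BVRep.leftLim a q x = BVRep.rightLim a q x ∧
        BVRep.leftLim a p x = BVRep.leftLim a q x} =
      q.μ {x ∈ Set.Ioo a b |
        BVRep.leftLim a p x = BVRep.rightLim a p x ∧
        BVRep.leftLim a q x = BVRep.rightLim a q x ∧
        BVRep.leftLim a p x = BVRep.leftLim a q x} ∧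
    p.μ.totalVariation {x ∈ Set.Ioo a b |
        BVRep.leftLim a p x = BVRep.rightLim a p x ∧
        BVRep.leftLim a q x = BVRep.rightLim a q x ∧
        BVRep.leftLim a p x = BVRep.leftLim a q x} =
      q.μ.totalVariation {x ∈ Set.Ioo a b |
        BVRep.leftLim a p x = BVRep.rightLim a p x ∧
        BVRep.leftLim a q x = BVRep.rightLim a q x ∧
        BVRep.leftLim a p x = BVRep.leftLim a q x} :=
  derivative_measures_agree_on_common_continuity_points_general a b p q
end

section
/- Let x ∈ ℝ, ε > 0, and let v : (x−ε, x+ε) → ℝ be Lipschitz continuous and α : (x−ε, x+ε) → ℝ be differentiable at x, with v(t) ≥ −α(t) for all t and v(x) = −α(x). Suppose there exist real numbers m < M such that v′(t) ≤ m for almost every t ∈ (x, x+ε) and v′(t) ≥ M for almost every t ∈ (x−ε, x). Then a contradiction follows; i.e., no such pair (v, α) exists. -/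
/-!
By the fundamental theorem of calculus for absolutely continuous (in particular Lipschitz)
functions, the a.e. bounds on `v'` give `v t - v x ≤ m (t - x)` to the right of `x` and
`v x - v t ≥ M (x - t)` to the left. Since `v + α ≥ 0` vanishes at `x`, the right slopes of `α`
at `x` are `≥ -m` and the left slopes are `≤ -M < -m`, so `α` cannot be differentiable at `x`.
-/

open MeasureTheory Set Filter Topology

namespace AbsolutelyContinuousOnInterval

variable {f : ℝ → ℝ} {a b c : ℝ}

theorem sub_le_mul_of_ae_deriv_le (hf : AbsolutelyContinuousOnInterval f a b) (hab : a ≤ b)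
    (hd : ∀ᵐ t, t ∈ Ioo a b → DifferentiableAt ℝ f t → deriv f t ≤ c) :
    f b - f a ≤ c * (b - a) := by
  have hle : ∀ᵐ t ∂volume.restrict (Icc a b), deriv f t ≤ c := by
    rw [← Measure.restrict_congr_set Ioo_ae_eq_Icc, ae_restrict_iff' measurableSet_Ioo]
    filter_upwards [hd, hf.ae_differentiableAt] with t hdt hdiff ht
    exact hdt ht (hdiff (Ioo_subset_Icc_self.trans Icc_subset_uIcc ht))
  calc f b - f a = ∫ t in a..b, deriv f t := hf.integral_deriv_eq_sub.symm
    _ ≤ ∫ _ in a..b, c :=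
      intervalIntegral.integral_mono_ae_restrict hab hf.intervalIntegrable_deriv
        intervalIntegrable_const hle
    _ = c * (b - a) := by simp [mul_comm]

theorem mul_le_sub_of_ae_le_deriv (hf : AbsolutelyContinuousOnInterval f a b) (hab : a ≤ b)
    (hd : ∀ᵐ t, t ∈ Ioo a b → DifferentiableAt ℝ f t → c ≤ deriv f t) :
    c * (b - a) ≤ f b - f a := by
  have := hf.neg.sub_le_mul_of_ae_deriv_le (c := -c) hab ?_
  · simp only [Pi.neg_apply] at this
    linarith
  filter_upwards [hd] with t hdt ht hdiff
  rw [deriv.neg, neg_le_neg_iff]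
  exact hdt ht (differentiableAt_neg_iff.1 hdiff)

end AbsolutelyContinuousOnInterval

theorem HasDerivAt.le_of_eventually_le_slope_right {f : ℝ → ℝ} {f' x c : ℝ}
    (hf : HasDerivAt f f' x) (h : ∀ᶠ t in 𝓝[>] x, c ≤ slope f x t) : c ≤ f' :=
  ge_of_tendsto (hasDerivAt_iff_tendsto_slope_left_right.1 hf).2 h

theorem HasDerivAt.le_of_eventually_slope_le_left {f : ℝ → ℝ} {f' x c : ℝ}
    (hf : HasDerivAt f f' x) (h : ∀ᶠ t in 𝓝[<] x, slope f x t ≤ c) : f' ≤ c :=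
  le_of_tendsto (hasDerivAt_iff_tendsto_slope_left_right.1 hf).1 h

/-- let `v` be Lipschitz on `(x-ε, x+ε)` and `α` differentiable at `x`, with
`v ≥ -α` on the interval and `v(x) = -α(x)`. If there are `m < M` with `v' ≤ m` a.e. on
`(x, x+ε)` and `v' ≥ M` a.e. on `(x-ε, x)`, then a contradiction follows. -/
theorem no_jump_where_weight_differentiable
    (x ε m M : ℝ) (hε : 0 < ε) (hmM : m < M)
    (v α : ℝ → ℝ) (K : NNReal)
    (hv : LipschitzOnWith K v (Set.Ioo (x - ε) (x + ε)))
    (hα : DifferentiableAt ℝ α x)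
    (hge : ∀ t ∈ Set.Ioo (x - ε) (x + ε), -α t ≤ v t)
    (hvx : v x = -α x)
    (hright : ∀ᵐ t ∂MeasureTheory.volume,
      t ∈ Set.Ioo x (x + ε) → DifferentiableAt ℝ v t → deriv v t ≤ m)
    (hleft : ∀ᵐ t ∂MeasureTheory.volume,
      t ∈ Set.Ioo (x - ε) x → DifferentiableAt ℝ v t → M ≤ deriv v t) :
    False := by
  have hx : x ∈ Ioo (x - ε) (x + ε) := ⟨by linarith, by linarith⟩
  have hac : ∀ t ∈ Ioo (x - ε) (x + ε), AbsolutelyContinuousOnInterval v x t := fun t ht =>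
    (hv.mono (ordConnected_Ioo.uIcc_subset hx ht)).absolutelyContinuousOnInterval
  have hslope_right : ∀ᶠ t in 𝓝[>] x, -m ≤ slope α x t := by
    filter_upwards [Ioo_mem_nhdsGT (by linarith : x < x + ε)] with t ht
    have ht' : t ∈ Ioo (x - ε) (x + ε) := ⟨by linarith [ht.1], ht.2⟩
    have hv_le := (hac t ht').sub_le_mul_of_ae_deriv_le ht.1.le
      (hright.mono fun s hs hst => hs ⟨hst.1, hst.2.trans ht.2⟩)
    rw [slope_def_field, le_div_iff₀ (sub_pos.2 ht.1)]
    linarith [hge t ht']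
  have hslope_left : ∀ᶠ t in 𝓝[<] x, slope α x t ≤ -M := by
    filter_upwards [Ioo_mem_nhdsLT (by linarith : x - ε < x)] with t ht
    have ht' : t ∈ Ioo (x - ε) (x + ε) := ⟨ht.1, by linarith [ht.2]⟩
    have hv_ge := (hac t ht').symm.mul_le_sub_of_ae_le_deriv ht.2.le
      (hleft.mono fun s hs hst => hs ⟨ht.1.trans hst.1, hst.2⟩)
    rw [slope_def_field, div_le_iff_of_neg (sub_neg.2 ht.2)]
    linarith [hge t ht']
  linarith [hα.hasDerivAt.le_of_eventually_le_slope_right hslope_right,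
    hα.hasDerivAt.le_of_eventually_slope_le_left hslope_left]
end

section
/- Let Ω = (a,b), f ∈ L²(Ω), u ∈ BV(Ω), and α ∈ C(closure(Ω)) with α > 0 on all of closure(Ω). Define the energy E(u) = (1/2)∫_Ω (f−u)² dx + ∫_Ω α d|Du|. Let ũ be any representative of u, let S = esssup f and s = essinf f (assumed finite), and set u* (x) = max(min(S, ũ(x)), s), the truncation of ũ to [s, S]. Then u* ∈ BV(Ω) and E(u*) ≤ E(u). Consequently the minimizer u of E satisfies essinf f ≤ u ≤ esssup f almost everywhere. -/
open MeasureTheory Set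

/-- The good representative of a 1D BV function `x ↦ c + Du((a,x))`. -/
noncomputable def BVRep.fn (a : ℝ) (p : BVRep) : ℝ → ℝ :=
  fun x => p.c + p.μ (Set.Ioo a x)

/-- The energy `E(u) = (1/2)∫_Ω (f - u)² dx + ∫_Ω α d|Du|`. -/
noncomputable def wEnergy (a b : ℝ) (f α : ℝ → ℝ) (p : BVRep) : ℝ :=
  (1/2) * (∫ x in Set.Ioo a b, (f x - BVRep.fn a p x)^2) +
    ∫ x in Set.Ioo a b, α x ∂p.μ.totalVariation

/-! Write `u = c + μ((a, ·))` and `T t = max (min S t) s`. Since `T` is 1-Lipschitz, `g = T ∘ u`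
(held constant beyond `b`) satisfies `|g y - g x| ≤ |μ|([x, y) ∩ (a, b))`. Hence, with
`V = |μ|((-∞, ·) ∩ (a, b))`, both `(V + g) / 2` and `(V - g) / 2` are nondecreasing and
left-continuous; their Stieltjes measures `M₊`, `M₋` add up to `|μ|` restricted to `(a, b)`, and
`ν = M₊ - M₋` is a derivative of `T ∘ u` with `|ν| ≤ M₊ + M₋`. So truncation does not increase the
weighted total variation. For the fidelity term, `T` is the projection onto `[s, S] ∋ f`, so
`(f - T u)² + (u - T u)² ≤ (f - u)²` pointwise; for a minimizer this forces `u = T u` a.e. -/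

open Filter Topology Function
open scoped ENNReal

lemma lipschitzWith_clamp (S s : ℝ) : LipschitzWith 1 fun x : ℝ => max (min S x) s :=
  (LipschitzWith.id.const_min S).max_const s

lemma sq_sub_clamp_add_sq_sub_clamp_le {s S t : ℝ} (hs : s ≤ t) (hS : t ≤ S) (u : ℝ) :
    (t - max (min S u) s) ^ 2 + (u - max (min S u) s) ^ 2 ≤ (t - u) ^ 2 := by
  rcases le_total u S with huS | hSu
  · rcases le_total s u with hsu | hus
    · simp [min_eq_right huS, max_eq_left hsu]
    · rw [min_eq_right huS, max_eq_right hus]; nlinarith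
  · rw [min_eq_left hSu, max_eq_left (hs.trans hS)]; nlinarith

lemma clamp_eq_self_iff {s S u : ℝ} (hsS : s ≤ S) : max (min S u) s = u ↔ s ≤ u ∧ u ≤ S :=
  ⟨fun h => ⟨h ▸ le_max_right _ _, h ▸ max_le (min_le_left _ _) hsS⟩,
    fun h => by rw [min_eq_right h.2, max_eq_left h.1]⟩

lemma tendsto_measure_Ico_nhdsLT (m : Measure ℝ) [IsFiniteMeasure m] (y : ℝ) :
    Tendsto (fun x => m (Ico x y)) (𝓝[<] y) (𝓝 0) := by
  have hlim := tendsto_measure_biInter_gt (μ := m) (ι := ℝᵒᵈ) (a := OrderDual.toDual y)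
    (s := fun r => Ico (OrderDual.ofDual r) y) (fun r _ => measurableSet_Ico.nullMeasurableSet)
    (fun i j _ hij => Ico_subset_Ico_left hij)
    ⟨OrderDual.toDual (y - 1), OrderDual.toDual_lt_toDual.2 (sub_one_lt y), measure_ne_top _ _⟩
  have hempty : (⋂ r > OrderDual.toDual y, Ico (OrderDual.ofDual r) y) = ∅ :=
    eq_empty_of_forall_notMem fun x hx => by
      have hxy := (mem_iInter₂.1 hx _ (OrderDual.toDual_lt_toDual.2 (sub_one_lt y))).2
      have hmid := (mem_iInter₂.1 hx (OrderDual.toDual ((x + y) / 2))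
        (OrderDual.toDual_lt_toDual.2 (by linarith))).1
      rw [OrderDual.ofDual_toDual] at hmid
      linarith
  rwa [hempty, measure_empty] at hlim

lemma Monotone.exists_measure_Ico_eq {h : ℝ → ℝ} (hh : Monotone h)
    (hl : ∀ y, Tendsto h (𝓝[<] y) (𝓝 (h y))) :
    ∃ M : Measure ℝ, ∀ x y, M (Ico x y) = ENNReal.ofReal (h y - h x) := by
  have hleft : ∀ y, leftLim hh.stieltjesFunction y = h y := fun y => by
    rw [funext hh.stieltjesFunction_eq, leftLim_rightLim (hh.tendsto_leftLim y),
      leftLim_eq_of_tendsto (hl y)]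
  exact ⟨hh.stieltjesFunction.measure, fun x y => by
    rw [StieltjesFunction.measure_Ico, hleft, hleft]⟩

section Domination

variable {m : Measure ℝ} [IsFiniteMeasure m] {g : ℝ → ℝ}

lemma measureReal_Iio_sub_measureReal_Iio {x y : ℝ} (hxy : x ≤ y) :
    m.real (Iio y) - m.real (Iio x) = m.real (Ico x y) := by
  rw [← Iio_union_Ico_eq_Iio hxy,
    measureReal_union ((Iio_disjoint_Ici le_rfl).mono_right Ico_subset_Ici_self) measurableSet_Ico,
    add_sub_cancel_left]

lemma tendsto_nhdsLT_of_abs_sub_le_measureReal_Ico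
    (hg : ∀ x y, x ≤ y → |g y - g x| ≤ m.real (Ico x y)) (y : ℝ) :
    Tendsto g (𝓝[<] y) (𝓝 (g y)) := by
  have hm : Tendsto (fun x => m.real (Ico x y)) (𝓝[<] y) (𝓝 0) :=
    (ENNReal.tendsto_toReal ENNReal.zero_ne_top).comp (tendsto_measure_Ico_nhdsLT m y)
  rw [tendsto_iff_norm_sub_tendsto_zero]
  refine squeeze_zero' (Eventually.of_forall fun _ => norm_nonneg _) ?_ hm
  filter_upwards [self_mem_nhdsWithin] with x (hx : x < y)
  rw [Real.norm_eq_abs, abs_sub_comm]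
  exact hg x y hx.le

lemma exists_measure_Ico_eq_half_add (hg : ∀ x y, x ≤ y → |g y - g x| ≤ m.real (Ico x y)) :
    ∃ M : Measure ℝ, ∀ x y, x ≤ y →
      M (Ico x y) = ENNReal.ofReal ((m.real (Ico x y) + (g y - g x)) / 2) := by
  have hV : ∀ x y, x ≤ y → |m.real (Iio y) - m.real (Iio x)| ≤ m.real (Ico x y) :=
    fun x y hxy => by rw [measureReal_Iio_sub_measureReal_Iio hxy, abs_of_nonneg measureReal_nonneg]
  have hmono : Monotone fun x => (m.real (Iio x) + g x) / 2 := fun x y hxy => by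
    have := neg_abs_le (g y - g x)
    have := hg x y hxy
    have := measureReal_Iio_sub_measureReal_Iio (m := m) hxy
    dsimp only
    linarith
  obtain ⟨M, hM⟩ := hmono.exists_measure_Ico_eq fun y =>
    ((tendsto_nhdsLT_of_abs_sub_le_measureReal_Ico hV y).add
      (tendsto_nhdsLT_of_abs_sub_le_measureReal_Ico hg y)).div_const 2
  refine ⟨M, fun x y hxy => ?_⟩
  rw [hM, ← measureReal_Iio_sub_measureReal_Iio hxy]
  ring_nf

theorem exists_signedMeasure_Ico_eq_of_abs_sub_le
    (hg : ∀ x y, x ≤ y → |g y - g x| ≤ m.real (Ico x y)) :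
    ∃ ν : SignedMeasure ℝ, (∀ x y, x ≤ y → ν (Ico x y) = g y - g x) ∧ ν.totalVariation ≤ m := by
  obtain ⟨M₁, hM₁⟩ := exists_measure_Ico_eq_half_add hg
  obtain ⟨M₂, hM₂⟩ := exists_measure_Ico_eq_half_add (m := m) (g := fun x => -g x)
    fun x y hxy => by simpa only [← neg_sub', abs_neg] using hg x y hxy
  have hpos : ∀ x y, x ≤ y → 0 ≤ (m.real (Ico x y) + (g y - g x)) / 2 ∧
      0 ≤ (m.real (Ico x y) + (-g y - -g x)) / 2 := fun x y hxy => by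
    have := abs_le.1 (hg x y hxy)
    constructor <;> linarith
  have hsum : m = M₁ + M₂ := Measure.ext_of_Ico _ _ fun x y hxy => by
    rw [Measure.add_apply, hM₁ x y hxy.le, hM₂ x y hxy.le, ← ENNReal.ofReal_add (hpos x y hxy.le).1
      (hpos x y hxy.le).2, ← ofReal_measureReal]
    ring_nf
  have : IsFiniteMeasure M₁ := isFiniteMeasure_of_le m (hsum ▸ Measure.le_add_right le_rfl)
  have : IsFiniteMeasure M₂ := isFiniteMeasure_of_le m (hsum ▸ Measure.le_add_left le_rfl)
  refine ⟨M₁.toSignedMeasure - M₂.toSignedMeasure, fun x y hxy => ?_, ?_⟩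
  · rw [Measure.toSignedMeasure_sub_apply measurableSet_Ico, measureReal_def, measureReal_def,
      hM₁ x y hxy, hM₂ x y hxy, ENNReal.toReal_ofReal (hpos x y hxy).1,
      ENNReal.toReal_ofReal (hpos x y hxy).2]
    ring
  · rw [SignedMeasure.totalVariation_eq_variation, hsum]
    refine VectorMeasure.variation_sub_le.trans ?_
    simp

end Domination

namespace MeasureTheory.SignedMeasure

variable {X : Type*} [MeasurableSpace X]

lemma abs_apply_sub_apply_le_totalVariation_sdiff (μ : SignedMeasure X) {A B : Set X}
    (hA : MeasurableSet A) (hB : MeasurableSet B) (hAB : A ⊆ B) :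
    |μ B - μ A| ≤ μ.totalVariation.real (B \ A) := by
  rw [← VectorMeasure.of_sdiff hA hB hAB]
  exact μ.norm_le_totalVariation _

lemma measurable_apply_Ioo (μ : SignedMeasure ℝ) (a : ℝ) : Measurable fun x => μ (Ioo a x) := by
  have hmono : ∀ ρ : Measure ℝ, [IsFiniteMeasure ρ] → Monotone fun x => ρ.real (Ioo a x) :=
    fun ρ _ x y hxy => measureReal_mono (Ioo_subset_Ioo_right hxy)
  simp_rw [μ.apply_eq_posPart_real_sub_negPart_real measurableSet_Ioo]
  exact (hmono _).measurable.sub (hmono _).measurable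

end MeasureTheory.SignedMeasure

namespace BVRep

variable (a : ℝ) (p : BVRep)

lemma measurable_fn : Measurable (p.fn a) :=
  measurable_const.add (p.μ.measurable_apply_Ioo a)

lemma abs_fn_le (x : ℝ) : |p.fn a x| ≤ |p.c| + p.μ.totalVariation.real univ :=
  (abs_add_le _ _).trans <| add_le_add le_rfl
    ((p.μ.norm_le_totalVariation _).trans (measureReal_mono (subset_univ _)))

lemma memLp_fn (μ : Measure ℝ) [IsFiniteMeasure μ] (r : ℝ≥0∞) : MemLp (p.fn a) r μ :=
  .of_bound (p.measurable_fn a).aestronglyMeasurable _ (.of_forall (p.abs_fn_le a))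

lemma abs_fn_min_sub_fn_min_le (b : ℝ) {x y : ℝ} (hxy : x ≤ y) :
    |p.fn a (min y b) - p.fn a (min x b)|
      ≤ (p.μ.totalVariation.restrict (Ioo a b)).real (Ico x y) := by
  have hsub : Ioo a (min x b) ⊆ Ioo a (min y b) := Ioo_subset_Ioo_right (min_le_min_right b hxy)
  rw [measureReal_restrict_apply measurableSet_Ico, fn, fn, add_sub_add_left_eq_sub]
  refine (p.μ.abs_apply_sub_apply_le_totalVariation_sdiff measurableSet_Ioo measurableSet_Ioo
    hsub).trans (measureReal_mono fun z ⟨⟨haz, hzy⟩, hzx⟩ => ?_)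
  simp only [mem_Ioo, not_and, not_lt, lt_min_iff] at hzy hzx ⊢
  exact ⟨⟨not_lt.1 fun hzx' => (hzx haz hzx').not_gt hzy.2, hzy.1⟩, haz, hzy.2⟩

theorem exists_fn_eq_comp (b : ℝ) {φ : ℝ → ℝ} (hφ : LipschitzWith 1 φ) :
    ∃ q : BVRep, (∀ x ∈ Ioo a b, q.fn a x = φ (p.fn a x)) ∧
      q.μ.totalVariation ≤ p.μ.totalVariation.restrict (Ioo a b) := by
  set g := fun x => φ (p.fn a (min x b))
  have hg : ∀ x y, x ≤ y → |g y - g x| ≤ (p.μ.totalVariation.restrict (Ioo a b)).real (Ico x y) :=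
    fun x y hxy => by
      have hφxy := hφ.dist_le_mul (p.fn a (min y b)) (p.fn a (min x b))
      rw [NNReal.coe_one, one_mul, Real.dist_eq, Real.dist_eq] at hφxy
      exact hφxy.trans (p.abs_fn_min_sub_fn_min_le a b hxy)
  obtain ⟨ν, hνg, hνm⟩ := exists_signedMeasure_Ico_eq_of_abs_sub_le hg
  have hνa : ν {a} = 0 := ν.null_of_totalVariation_zero <| le_zero_iff.1 <|
    (hνm {a}).trans_eq <| by simp [Measure.restrict_apply]
  refine ⟨⟨g a, ν⟩, fun x hx => ?_, hνm⟩
  have hνx : ν (Ioo a x) = g x - g a := by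
    rw [← hνg a x hx.1.le, ← Icc_union_Ioo_eq_Ico le_rfl hx.1,
      VectorMeasure.of_union (by simp) measurableSet_Icc measurableSet_Ioo, Icc_self, hνa, zero_add]
  simp only [fn, hνx, g, min_eq_left hx.2.le]
  ring

end BVRep

section Fidelity

variable {X : Type*} [MeasurableSpace X] {μ : Measure X} {f u : X → ℝ} {s S : ℝ}

lemma integrable_sq_sub_clamp (hf : AEStronglyMeasurable f μ) (hu : AEStronglyMeasurable u μ)
    (hfu : Integrable (fun x => (f x - u x) ^ 2) μ) (hfs : ∀ᵐ x ∂μ, s ≤ f x ∧ f x ≤ S) :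
    Integrable (fun x => (f x - max (min S (u x)) s) ^ 2) μ ∧
      Integrable (fun x => (u x - max (min S (u x)) s) ^ 2) μ := by
  have hTu : AEStronglyMeasurable (fun x => max (min S (u x)) s) μ :=
    (lipschitzWith_clamp S s).continuous.comp_aestronglyMeasurable hu
  have hpt := hfs.mono fun x hx => sq_sub_clamp_add_sq_sub_clamp_le hx.1 hx.2 (u x)
  refine ⟨hfu.mono' ((hf.sub hTu).pow 2) ?_, hfu.mono' ((hu.sub hTu).pow 2) ?_⟩ <;>
    filter_upwards [hpt] with x hx <;>
    rw [Real.norm_of_nonneg (sq_nonneg _)] <;>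
    linarith [sq_nonneg (f x - max (min S (u x)) s), sq_nonneg (u x - max (min S (u x)) s)]

theorem integral_sq_sub_clamp_add_le (hf : AEStronglyMeasurable f μ)
    (hu : AEStronglyMeasurable u μ) (hfu : Integrable (fun x => (f x - u x) ^ 2) μ)
    (hfs : ∀ᵐ x ∂μ, s ≤ f x ∧ f x ≤ S) :
    ∫ x, (f x - max (min S (u x)) s) ^ 2 ∂μ + ∫ x, (u x - max (min S (u x)) s) ^ 2 ∂μ
      ≤ ∫ x, (f x - u x) ^ 2 ∂μ := by
  obtain ⟨hi₁, hi₂⟩ := integrable_sq_sub_clamp hf hu hfu hfs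
  rw [← integral_add hi₁ hi₂]
  exact integral_mono_ae (hi₁.add hi₂) hfu
    (hfs.mono fun x hx => sq_sub_clamp_add_sq_sub_clamp_le hx.1 hx.2 (u x))

theorem ae_mem_Icc_of_integral_sq_sub_le (hf : AEStronglyMeasurable f μ)
    (hu : AEStronglyMeasurable u μ) (hfu : Integrable (fun x => (f x - u x) ^ 2) μ)
    (hfs : ∀ᵐ x ∂μ, s ≤ f x ∧ f x ≤ S)
    (hmin : ∫ x, (f x - u x) ^ 2 ∂μ ≤ ∫ x, (f x - max (min S (u x)) s) ^ 2 ∂μ) :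
    ∀ᵐ x ∂μ, s ≤ u x ∧ u x ≤ S := by
  have hi₂ := (integrable_sq_sub_clamp hf hu hfu hfs).2
  have hzero : ∫ x, (u x - max (min S (u x)) s) ^ 2 ∂μ = 0 :=
    le_antisymm (by linarith [integral_sq_sub_clamp_add_le hf hu hfu hfs])
      (integral_nonneg fun _ => sq_nonneg _)
  filter_upwards [(integral_eq_zero_iff_of_nonneg (fun _ => sq_nonneg _) hi₂).1 hzero, hfs]
    with x hx hfx
  exact clamp_eq_self_iff (hfx.1.trans hfx.2) |>.1 (by simpa [sub_eq_zero, eq_comm] using hx)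

end Fidelity

theorem truncation_decreases_energy_general
    (a b : ℝ) (f α : ℝ → ℝ)
    (hf : MeasureTheory.MemLp f 2 (MeasureTheory.volume.restrict (Set.Ioo a b)))
    (hαc : ContinuousOn α (Set.Icc a b)) (hαpos : ∀ x ∈ Set.Icc a b, 0 < α x)
    (S s : ℝ)
    (hbdd : ∀ᵐ x ∂(MeasureTheory.volume.restrict (Set.Ioo a b)), s ≤ f x ∧ f x ≤ S)
    (p : BVRep) :
    (∃ q : BVRep,
        (∀ x ∈ Set.Ioo a b, BVRep.fn a q x = max (min S (BVRep.fn a p x)) s) ∧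
        wEnergy a b f α q ≤ wEnergy a b f α p) ∧
      ((∀ q : BVRep, wEnergy a b f α p ≤ wEnergy a b f α q) →
        ∀ᵐ x ∂(MeasureTheory.volume.restrict (Set.Ioo a b)),
          s ≤ BVRep.fn a p x ∧ BVRep.fn a p x ≤ S) := by
  obtain ⟨q, hqp, hqμ⟩ := p.exists_fn_eq_comp a b (lipschitzWith_clamp S s)
  have hu := (p.measurable_fn a).aestronglyMeasurable (μ := volume.restrict (Ioo a b))
  have hfu := (hf.sub (p.memLp_fn a _ 2)).integrable_sq
  have hfid : ∫ x in Ioo a b, (f x - q.fn a x) ^ 2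
      = ∫ x in Ioo a b, (f x - max (min S (p.fn a x)) s) ^ 2 :=
    setIntegral_congr_fun measurableSet_Ioo fun x hx => by simp only [hqp x hx]
  have hTV : ∫ x in Ioo a b, α x ∂q.μ.totalVariation ≤ ∫ x in Ioo a b, α x ∂p.μ.totalVariation :=
    integral_mono_measure (Measure.restrict_le_self.trans hqμ)
      ((ae_restrict_iff' measurableSet_Ioo).2 <| .of_forall fun x hx =>
        (hαpos x (Ioo_subset_Icc_self hx)).le)
      ((hαc.integrableOn_compact isCompact_Icc).mono_set Ioo_subset_Icc_self)
  refine ⟨⟨q, hqp, ?_⟩, fun hmin => ?_⟩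
  · have hfid_le := integral_sq_sub_clamp_add_le hf.1 hu hfu hbdd
    have hdist : 0 ≤ ∫ x in Ioo a b, (p.fn a x - max (min S (p.fn a x)) s) ^ 2 :=
      integral_nonneg fun x => sq_nonneg _
    rw [wEnergy, wEnergy, hfid]
    linarith
  · refine ae_mem_Icc_of_integral_sq_sub_le hf.1 hu hfu hbdd ?_
    have hpq := hmin q
    rw [wEnergy, wEnergy, hfid] at hpq
    linarith

/-- maximum principle for weighted TV denoising: with
`S = esssup f`, `s = essinf f` finite, the truncation `u* = max(min(S, u), s)` of a BV
function `u` is again BV and has energy no larger than that of `u`; consequently any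
minimizer of the energy lies a.e. between `essinf f` and `esssup f`. -/
theorem truncation_decreases_energy
    (a b : ℝ) (hab : a < b) (f α : ℝ → ℝ)
    (hf : MeasureTheory.MemLp f 2 (MeasureTheory.volume.restrict (Set.Ioo a b)))
    (hαc : ContinuousOn α (Set.Icc a b)) (hαpos : ∀ x ∈ Set.Icc a b, 0 < α x)
    (S s : ℝ)
    (hS : S = essSup f (MeasureTheory.volume.restrict (Set.Ioo a b)))
    (hs : s = essInf f (MeasureTheory.volume.restrict (Set.Ioo a b)))
    (hbdd : ∀ᵐ x ∂(MeasureTheory.volume.restrict (Set.Ioo a b)), s ≤ f x ∧ f x ≤ S)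
    (p : BVRep) :
    (∃ q : BVRep,
        (∀ x ∈ Set.Ioo a b, BVRep.fn a q x = max (min S (BVRep.fn a p x)) s) ∧
        wEnergy a b f α q ≤ wEnergy a b f α p) ∧
      ((∀ q : BVRep, wEnergy a b f α p ≤ wEnergy a b f α q) →
        ∀ᵐ x ∂(MeasureTheory.volume.restrict (Set.Ioo a b)),
          s ≤ BVRep.fn a p x ∧ BVRep.fn a p x ≤ S) :=
  truncation_decreases_energy_general a b f α hf hαc hαpos S s hbdd p
end

section
/- Let Ω = (a,b), f ∈ BV(Ω), and α ∈ C(closure(Ω)) with α > 0. Suppose u ∈ BV(Ω) and v ∈ H¹₀(Ω) satisfy the optimality conditions v′ = f − u a.e. and −v(x) = α(x)·sgn(Du)(x) for |Du|-a.e. x with |v| ≤ α everywhere. If x₁ < x₂ are two points in Ω with sgn(Du)(x₁) = 1 and sgn(Du)(x₂) = −1 (for a continuous representative of sgn(Du) on supp|Du|), and v′ < 0 almost everywhere on (x₁, x₂), then a contradiction follows: v(x₁) = −α(x₁) < 0 < α(x₂) = v(x₂) while v is strictly decreasing on (x₁, x₂). -/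
open MeasureTheory Set

/- A Lipschitz function is absolutely continuous, so it is the integral of its a.e. derivative;
`v' < 0` a.e. on `(x₁, x₂)` therefore forces `v x₂ ≤ v x₁`, while the sign conditions and
`α > 0` give `v x₁ = -α x₁ < 0 < α x₂ = v x₂`. -/

theorem AbsolutelyContinuousOnInterval.le_of_ae_deriv_nonpos {f : ℝ → ℝ} {a b : ℝ}
    (hf : AbsolutelyContinuousOnInterval f a b) (hab : a ≤ b)
    (hderiv : ∀ᵐ t, t ∈ Ioo a b → deriv f t ≤ 0) :
    f b ≤ f a := by
  have hint : ∫ t in a..b, deriv f t ≤ 0 := by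
    rw [intervalIntegral.integral_of_le hab, integral_Ioc_eq_integral_Ioo]
    exact setIntegral_nonpos_ae measurableSet_Ioo hderiv
  linarith [hf.integral_deriv_eq_sub]

theorem no_oscillations_contradiction_general
    (a b x₁ x₂ : ℝ) (h1 : a < x₁) (h2 : x₁ < x₂) (h3 : x₂ < b)
    (α v : ℝ → ℝ)
    (hαpos : ∀ x ∈ Set.Icc a b, 0 < α x)
    (K : NNReal) (hv : LipschitzOnWith K v (Set.Icc a b))
    (hv1 : v x₁ = -α x₁) (hv2 : v x₂ = α x₂)
    (hdec : ∀ᵐ t ∂MeasureTheory.volume,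
      t ∈ Set.Ioo x₁ x₂ → DifferentiableAt ℝ v t → deriv v t < 0) :
    False := by
  have hsub : uIcc x₁ x₂ ⊆ Icc a b := by
    rw [uIcc_of_le h2.le]
    exact Icc_subset_Icc h1.le h3.le
  have hac : AbsolutelyContinuousOnInterval v x₁ x₂ :=
    (hv.mono hsub).absolutelyContinuousOnInterval
  -- where `v` is not differentiable, `deriv v = 0` by convention
  have hnonpos : ∀ᵐ t, t ∈ Ioo x₁ x₂ → deriv v t ≤ 0 := by
    filter_upwards [hdec] with t ht hmem
    by_cases hdiff : DifferentiableAt ℝ v t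
    · exact (ht hmem hdiff).le
    · exact (deriv_zero_of_not_differentiableAt hdiff).le
  have hle : v x₂ ≤ v x₁ := hac.le_of_ae_deriv_nonpos h2.le hnonpos
  have hα₁ := hαpos x₁ (hsub left_mem_uIcc)
  have hα₂ := hαpos x₂ (hsub right_mem_uIcc)
  linarith

/-- no oscillations: let `Ω = (a,b)`, `α` continuous and positive on the
closure of `Ω`, and `v` Lipschitz. If at two points `x₁ < x₂` of `Ω` the dual variable
satisfies the sign conditions `v(x₁) = -α(x₁)` and `v(x₂) = α(x₂)` (coming from
`sgn(Du)(x₁) = 1`, `sgn(Du)(x₂) = -1`), while `v' < 0` almost everywhere on `(x₁, x₂)`,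
then a contradiction follows: `v(x₁) < 0 < v(x₂)` although `v` is strictly decreasing. -/
theorem no_oscillations_contradiction
    (a b x₁ x₂ : ℝ) (h1 : a < x₁) (h2 : x₁ < x₂) (h3 : x₂ < b)
    (α v : ℝ → ℝ)
    (hα : ContinuousOn α (Set.Icc a b))
    (hαpos : ∀ x ∈ Set.Icc a b, 0 < α x)
    (K : NNReal) (hv : LipschitzOnWith K v (Set.Icc a b))
    (hv1 : v x₁ = -α x₁) (hv2 : v x₂ = α x₂)
    (hdec : ∀ᵐ t ∂MeasureTheory.volume,
      t ∈ Set.Ioo x₁ x₂ → DifferentiableAt ℝ v t → deriv v t < 0) :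
    False :=
  no_oscillations_contradiction_general a b x₁ x₂ h1 h2 h3 α v hαpos K hv hv1 hv2 hdec
end
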